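/- Let h : ℝⁿ → ℝⁿ and let F̄ ∈ ℝ^{n×n} be a nonnegative matrix such that |h(c₁) − h(c₂)| ≤ F̄ |c₁ − c₂| entrywise for all c₁, c₂ ∈ ℝⁿ. Let W₁ ∈ ℝ^{n'×n'}, W₂ ∈ ℝ^{n'×n}, W₃ ∈ ℝ^{n×n'} be such that ρ(|W₁| + |W₂| F̄ |W₃|) < 1. Then for every w̄ ∈ ℝⁿ, c ∈ ℝ^{n'}, and m ∈ ((0,∞])^{n'}, there exists a unique x* ∈ ℝ^{n'} satisfying x* = [W₁ x* + W₂ h(W₃ x* + w̄) + c]₀^m. -/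

import Mathlib

/-!
The map `T` is entrywise Lipschitz: `|T x - T y| ≤ G |x - y|` with `G = |W₁| + |W₂| F̄ |W₃|`,
because the saturation is 1-Lipschitz in each coordinate. Entrywise bounds compose by matrix
products, so `|Tᴺ x - Tᴺ y| ≤ Gᴺ |x - y|`, and hence `Tᴺ` is `‖Gᴺ‖`-Lipschitz for the sup norm
and the induced row-sum norm. By Gelfand's formula `‖Gᴺ‖^(1/N) → ρ(G) < 1`, so some iterate `Tᴺ`
is a contraction of the complete space `ℝ^{n'}`; its unique fixed point is then the unique fixed
point of `T`.
-/

open Matrix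

/-- Saturation `[x]₀^m = min{max{x,0}, m}` where the upper bound `m ∈ (0,∞]` is an
extended nonnegative real (`m = ⊤` means no upper saturation). -/
noncomputable def clampE (m : ENNReal) (x : ℝ) : ℝ :=
  if m = ⊤ then max x 0 else min (max x 0) m.toReal

/-- Spectral radius of a real matrix: the largest modulus of its complex eigenvalues. -/
noncomputable def specRad {n : ℕ} (A : Matrix (Fin n) (Fin n) ℝ) : ℝ :=
  (spectralRadius ℂ (A.map (Complex.ofReal ·))).toReal

/-- The comparison matrix `|W₁| + |W₂| F̄ |W₃|`, with `|·|` the entrywise absolute value. -/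
noncomputable def gainMat {n n' : ℕ} (W₁ : Matrix (Fin n') (Fin n') ℝ)
    (W₂ : Matrix (Fin n') (Fin n) ℝ) (W₃ : Matrix (Fin n) (Fin n') ℝ)
    (Fbar : Matrix (Fin n) (Fin n) ℝ) : Matrix (Fin n') (Fin n') ℝ :=
  W₁.map (fun a => |a|) + W₂.map (fun a => |a|) * Fbar * W₃.map (fun a => |a|)

/-- The map `T(x) = [W₁ x + W₂ h(W₃ x + w̄) + c]₀^m`. -/
noncomputable def Tmap {n n' : ℕ} (W₁ : Matrix (Fin n') (Fin n') ℝ)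
    (W₂ : Matrix (Fin n') (Fin n) ℝ) (W₃ : Matrix (Fin n) (Fin n') ℝ)
    (h : (Fin n → ℝ) → (Fin n → ℝ)) (wbar : Fin n → ℝ) (c : Fin n' → ℝ)
    (m : Fin n' → ENNReal) (x : Fin n' → ℝ) : Fin n' → ℝ :=
  fun i => clampE (m i) ((W₁.mulVec x + W₂.mulVec (h (W₃.mulVec x + wbar)) + c) i)

open Function

section SpectralRadius

variable {A : Type*} [NormedRing A] [NormedAlgebra ℂ A] [CompleteSpace A]

theorem spectralRadius_ne_top (a : A) : spectralRadius ℂ a ≠ ⊤ := by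
  refine ne_top_of_le_ne_top ?_ (spectrum.spectralRadius_le_pow_nnnorm_pow_one_div ℂ a 0)
  exact ENNReal.mul_ne_top (ENNReal.rpow_ne_top_of_nonneg (by norm_num) ENNReal.coe_ne_top)
    (ENNReal.rpow_ne_top_of_nonneg (by norm_num) ENNReal.coe_ne_top)

theorem exists_nnnorm_pow_lt_one_of_spectralRadius_lt_one {a : A}
    (ha : spectralRadius ℂ a < 1) : ∃ N, ‖a ^ N‖₊ < 1 := by
  obtain ⟨N, hlt, hN⟩ := ((spectrum.pow_nnnorm_pow_one_div_tendsto_nhds_spectralRadius a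
    |>.eventually_lt_const ha).and (Filter.eventually_ge_atTop 1)).exists
  exact ⟨N, not_le.1 fun h1 =>
    hlt.not_ge (ENNReal.one_le_rpow (by exact_mod_cast h1) (by positivity))⟩

end SpectralRadius

instance Pi.hasSolidNorm {ι : Type*} [Fintype ι] {α : ι → Type*}
    [∀ i, NormedAddCommGroup (α i)] [∀ i, Lattice (α i)] [∀ i, HasSolidNorm (α i)] :
    HasSolidNorm (∀ i, α i) where
  solid _ b h := (pi_norm_le_iff_of_nonneg (norm_nonneg b)).2 fun i =>
    (norm_le_norm_of_abs_le_abs (h i)).trans (norm_le_pi_norm b i)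

namespace Matrix

variable {ι κ : Type*} [Fintype κ]

theorem mulVec_le_mulVec_of_nonneg {A : Matrix ι κ ℝ} (hA : ∀ i j, 0 ≤ A i j) {u v : κ → ℝ}
    (huv : u ≤ v) : A *ᵥ u ≤ A *ᵥ v := fun i =>
  dotProduct_le_dotProduct_of_nonneg_left huv (hA i)

theorem abs_mulVec_le (A : Matrix ι κ ℝ) (v : κ → ℝ) : |A *ᵥ v| ≤ A.map abs *ᵥ |v| := fun _ =>
  (Finset.abs_sum_le_sum_abs _ _).trans_eq (Finset.sum_congr rfl fun _ _ => abs_mul _ _)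

attribute [local instance] Matrix.linftyOpNormedAddCommGroup Matrix.linftyOpNormedRing
  Matrix.linftyOpNormedAlgebra

theorem linfty_opNNNorm_map_ofReal [Fintype ι] (A : Matrix ι κ ℝ) :
    ‖A.map ((↑) : ℝ → ℂ)‖₊ = ‖A‖₊ := by
  simp only [linfty_opNNNorm_def, map_apply, Complex.nnnorm_real]

theorem exists_linfty_opNNNorm_pow_lt_one [DecidableEq κ] {A : Matrix κ κ ℝ}
    (hA : spectralRadius ℂ (A.map ((↑) : ℝ → ℂ)) < 1) : ∃ N, ‖A ^ N‖₊ < 1 := by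
  obtain ⟨N, hN⟩ := exists_nnnorm_pow_lt_one_of_spectralRadius_lt_one hA
  refine ⟨N, ?_⟩
  rwa [show A.map ((↑) : ℝ → ℂ) ^ N = (A ^ N).map (↑) from (A.map_pow Complex.ofRealHom N).symm,
    linfty_opNNNorm_map_ofReal] at hN

theorem spectralRadius_map_ofReal_ne_top [DecidableEq κ] (A : Matrix κ κ ℝ) :
    spectralRadius ℂ (A.map ((↑) : ℝ → ℂ)) ≠ ⊤ :=
  spectralRadius_ne_top _

end Matrix

theorem specRad_lt_one_iff {n : ℕ} (A : Matrix (Fin n) (Fin n) ℝ) :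
    specRad A < 1 ↔ spectralRadius ℂ (A.map ((↑) : ℝ → ℂ)) < 1 := by
  rw [specRad, ← ENNReal.toReal_one,
    ENNReal.toReal_lt_toReal A.spectralRadius_map_ofReal_ne_top ENNReal.one_ne_top]

def EntrywiseLipschitzWith {ι κ : Type*} [Fintype κ] (G : Matrix ι κ ℝ)
    (T : (κ → ℝ) → ι → ℝ) : Prop :=
  ∀ x y, |T x - T y| ≤ G *ᵥ |x - y|

namespace EntrywiseLipschitzWith

variable {ι κ μ : Type*} [Fintype κ] [Fintype μ]

theorem mulVec (A : Matrix ι κ ℝ) : EntrywiseLipschitzWith (A.map abs) (A *ᵥ ·) := fun x y => by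
  simpa only [← Matrix.mulVec_sub] using A.abs_mulVec_le (x - y)

theorem of_abs_sub_le [DecidableEq κ] {f : κ → ℝ → ℝ} (hf : ∀ i a b, |f i a - f i b| ≤ |a - b|) :
    EntrywiseLipschitzWith 1 (fun x i => f i (x i)) := fun x y i => by
  rw [one_mulVec]
  exact hf i (x i) (y i)

variable {G H : Matrix ι κ ℝ} {T S : (κ → ℝ) → ι → ℝ}

theorem add (hT : EntrywiseLipschitzWith G T) (hS : EntrywiseLipschitzWith H S) :
    EntrywiseLipschitzWith (G + H) (fun x => T x + S x) := fun x y =>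
  calc |T x + S x - (T y + S y)| = |(T x - T y) + (S x - S y)| := by rw [add_sub_add_comm]
    _ ≤ |T x - T y| + |S x - S y| := abs_add_le _ _
    _ ≤ (G + H) *ᵥ |x - y| := by rw [add_mulVec]; exact add_le_add (hT x y) (hS x y)

theorem add_const (hT : EntrywiseLipschitzWith G T) (c : ι → ℝ) :
    EntrywiseLipschitzWith G (fun x => T x + c) := fun x y => by
  simpa only [add_sub_add_right_eq_sub] using hT x y

theorem nonneg [DecidableEq κ] (hT : EntrywiseLipschitzWith G T) (i : ι) (j : κ) : 0 ≤ G i j := by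
  have hej : |(Pi.single j 1 : κ → ℝ)| = Pi.single j 1 :=
    abs_of_nonneg (Pi.single_nonneg.2 zero_le_one)
  have h := hT (Pi.single j 1) 0 i
  rw [sub_zero, hej, mulVec_single_one] at h
  exact (abs_nonneg _).trans h

theorem comp [DecidableEq κ] {G : Matrix ι κ ℝ} {H : Matrix κ μ ℝ} {T : (κ → ℝ) → ι → ℝ}
    {S : (μ → ℝ) → κ → ℝ} (hT : EntrywiseLipschitzWith G T) (hS : EntrywiseLipschitzWith H S) :
    EntrywiseLipschitzWith (G * H) (T ∘ S) := fun x y =>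
  calc |T (S x) - T (S y)| ≤ G *ᵥ |S x - S y| := hT (S x) (S y)
    _ ≤ G *ᵥ (H *ᵥ |x - y|) := mulVec_le_mulVec_of_nonneg hT.nonneg (hS x y)
    _ = (G * H) *ᵥ |x - y| := mulVec_mulVec _ _ _

theorem iterate [DecidableEq κ] {G : Matrix κ κ ℝ} {T : (κ → ℝ) → κ → ℝ}
    (hT : EntrywiseLipschitzWith G T) : ∀ k, EntrywiseLipschitzWith (G ^ k) T^[k]
  | 0 => fun x y => by simp only [pow_zero, one_mulVec, iterate_zero, id_eq, le_refl]
  | k + 1 => by rw [pow_succ', iterate_succ']; exact hT.comp (hT.iterate k)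

attribute [local instance] Matrix.linftyOpNormedAddCommGroup

theorem lipschitzWith [Fintype ι] (hT : EntrywiseLipschitzWith G T) : LipschitzWith ‖G‖₊ T :=
  LipschitzWith.of_dist_le_mul fun x y => by
    simp only [dist_eq_norm, coe_nnnorm]
    calc ‖T x - T y‖ ≤ ‖G *ᵥ |x - y|‖ :=
          norm_le_norm_of_abs_le_abs ((hT x y).trans (le_abs_self _))
      _ ≤ ‖G‖ * ‖|x - y|‖ := linfty_opNorm_mulVec _ _
      _ = ‖G‖ * ‖x - y‖ := by rw [norm_abs_eq_norm]

theorem exists_unique_isFixedPt [DecidableEq κ] {G : Matrix κ κ ℝ} {T : (κ → ℝ) → κ → ℝ}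
    (hT : EntrywiseLipschitzWith G T) (hG : spectralRadius ℂ (G.map ((↑) : ℝ → ℂ)) < 1) :
    ∃! x, IsFixedPt T x := by
  obtain ⟨N, hN⟩ := exists_linfty_opNNNorm_pow_lt_one hG
  have hC : ContractingWith ‖G ^ N‖₊ T^[N] := ⟨hN, (hT.iterate N).lipschitzWith⟩
  have hfix : IsFixedPt T (hC.fixedPoint _) := hC.isFixedPt_fixedPoint_iterate
  exact ⟨_, hfix, fun y hy => hC.fixedPoint_unique' (hy.iterate N) hC.fixedPoint_isFixedPt⟩

end EntrywiseLipschitzWith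

theorem abs_clampE_sub_le (m : ENNReal) (a b : ℝ) : |clampE m a - clampE m b| ≤ |a - b| := by
  unfold clampE
  split_ifs
  · exact abs_max_sub_max_le_abs a b 0
  · calc |min (max a 0) m.toReal - min (max b 0) m.toReal|
        ≤ max |max a 0 - max b 0| |m.toReal - m.toReal| := abs_min_sub_min_le_max _ _ _ _
      _ = |max a 0 - max b 0| := by rw [sub_self, abs_zero, max_eq_left (abs_nonneg _)]
      _ ≤ |a - b| := abs_max_sub_max_le_abs a b 0

theorem entrywiseLipschitzWith_Tmap {n n' : ℕ} {h : (Fin n → ℝ) → Fin n → ℝ}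
    {Fbar : Matrix (Fin n) (Fin n) ℝ} (hh : EntrywiseLipschitzWith Fbar h)
    (W₁ : Matrix (Fin n') (Fin n') ℝ) (W₂ : Matrix (Fin n') (Fin n) ℝ)
    (W₃ : Matrix (Fin n) (Fin n') ℝ) (wbar : Fin n → ℝ) (c : Fin n' → ℝ)
    (m : Fin n' → ENNReal) :
    EntrywiseLipschitzWith (gainMat W₁ W₂ W₃ Fbar) (Tmap W₁ W₂ W₃ h wbar c m) := by
  have hinner := (EntrywiseLipschitzWith.mulVec W₃).add_const wbar
  have hpre := (((EntrywiseLipschitzWith.mulVec W₁).add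
    ((EntrywiseLipschitzWith.mulVec W₂).comp (hh.comp hinner))).add_const c)
  have hT := (EntrywiseLipschitzWith.of_abs_sub_le fun i => abs_clampE_sub_le (m i)).comp hpre
  rw [one_mul, ← Matrix.mul_assoc] at hT
  exact hT

theorem clamp_fixed_point_exists_unique_general
    {n n' : ℕ}
    (h : (Fin n → ℝ) → (Fin n → ℝ))
    (Fbar : Matrix (Fin n) (Fin n) ℝ)
    (hFlip : ∀ (c₁ c₂ : Fin n → ℝ) (i : Fin n),
      |h c₁ i - h c₂ i| ≤ Fbar.mulVec (fun j => |c₁ j - c₂ j|) i)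
    (W₁ : Matrix (Fin n') (Fin n') ℝ) (W₂ : Matrix (Fin n') (Fin n) ℝ)
    (W₃ : Matrix (Fin n) (Fin n') ℝ)
    (hspec : specRad (gainMat W₁ W₂ W₃ Fbar) < 1) :
    ∀ (wbar : Fin n → ℝ) (c : Fin n' → ℝ) (m : Fin n' → ENNReal), (∀ i, 0 < m i) →
      ∃! xstar : Fin n' → ℝ, xstar = Tmap W₁ W₂ W₃ h wbar c m xstar := by
  intro wbar c m _
  have hT := entrywiseLipschitzWith_Tmap hFlip W₁ W₂ W₃ wbar c m
  simpa only [IsFixedPt, eq_comm] using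
    hT.exists_unique_isFixedPt ((specRad_lt_one_iff _).1 hspec)

/-- If `|h(c₁) − h(c₂)| ≤ F̄|c₁ − c₂|` entrywise (`F̄ ≥ 0`) and
`ρ(|W₁| + |W₂| F̄ |W₃|) < 1`, then for every `w̄`, `c` and `m ∈ (0,∞]^{n'}` there is a unique
fixed point `x* = [W₁ x* + W₂ h(W₃ x* + w̄) + c]₀^m`. -/
theorem clamp_fixed_point_exists_unique
    {n n' : ℕ}
    (h : (Fin n → ℝ) → (Fin n → ℝ))
    (Fbar : Matrix (Fin n) (Fin n) ℝ) (hFnn : ∀ i j, 0 ≤ Fbar i j)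
    (hFlip : ∀ (c₁ c₂ : Fin n → ℝ) (i : Fin n),
      |h c₁ i - h c₂ i| ≤ Fbar.mulVec (fun j => |c₁ j - c₂ j|) i)
    (W₁ : Matrix (Fin n') (Fin n') ℝ) (W₂ : Matrix (Fin n') (Fin n) ℝ)
    (W₃ : Matrix (Fin n) (Fin n') ℝ)
    (hspec : specRad (gainMat W₁ W₂ W₃ Fbar) < 1) :
    ∀ (wbar : Fin n → ℝ) (c : Fin n' → ℝ) (m : Fin n' → ENNReal), (∀ i, 0 < m i) →
      ∃! xstar : Fin n' → ℝ, xstar = Tmap W₁ W₂ W₃ h wbar c m xstar :=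
  clamp_fixed_point_exists_unique_general h Fbar hFlip W₁ W₂ W₃ hspec
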